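/- arXiv:1307.0539 — 2 statements merged into one kernel-verified Lean document; each statement's English description precedes it below -/
import Mathlib

section
/- Let G = K_n be the complete graph on V = {1,…,n} (every pair of distinct nodes is an edge), let E_neg be nonempty, and take p_ij = 1/(n−1) for all i ≠ j, p_ii = 0. Let α ∈ (0,1] and β ≥ 0, and let L_neg denote the standard (unit-weight) graph Laplacian of the negative graph (V, E_neg). Then λ_max(I − αL⁺ + βL⁻ − U) < 1 if and only if (α+β)·λ_max(L_neg) < nα, and λ_max(I − αL⁺ + βL⁻ − U) > 1 if and only if (α+β)·λ_max(L_neg) > nα. In particular, the phase-transition threshold for belief convergence in expectation equals β_⋆ = nα/λ_max(L_neg) − α. -/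
open Matrix MeasureTheory Filter
open scoped ENNReal

noncomputable section

namespace SignedOpinion

/-- The vector `e i - e j` in `ℝⁿ`. -/
def esub {n : ℕ} (i j : Fin n) : Fin n → ℝ :=
  fun k => (if k = i then (1 : ℝ) else 0) - (if k = j then (1 : ℝ) else 0)

/-- The rank-one matrix `(e i - e j) (e i - e j)ᵀ`. -/
def dmatAux {n : ℕ} (i j : Fin n) : Matrix (Fin n) (Fin n) ℝ :=
  Matrix.vecMulVec (esub i j) (esub i j)

lemma dmatAux_symm {n : ℕ} (i j : Fin n) : dmatAux i j = dmatAux j i := by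
  ext a b
  simp only [dmatAux, esub, Matrix.vecMulVec_apply]
  ring

/-- `(e i - e j)(e i - e j)ᵀ` as a function of the unordered pair `{i, j}`. -/
def dmat {n : ℕ} : Sym2 (Fin n) → Matrix (Fin n) (Fin n) ℝ :=
  Sym2.lift ⟨dmatAux, dmatAux_symm⟩

/-- The averaging matrix `U = 𝟙𝟙ᵀ / n`. -/
def Umat (n : ℕ) : Matrix (Fin n) (Fin n) ℝ :=
  (n : ℝ)⁻¹ • Matrix.of (fun _ _ => (1 : ℝ))

/-- The positive update matrix `W⁺_{ij} = I - α (e i - e j)(e i - e j)ᵀ`. -/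
def Wpos {n : ℕ} (α : ℝ) (e : Sym2 (Fin n)) : Matrix (Fin n) (Fin n) ℝ :=
  1 - α • dmat e

/-- The negative update matrix `W⁻_{ij} = I + β (e i - e j)(e i - e j)ᵀ`. -/
def Wneg {n : ℕ} (β : ℝ) (e : Sym2 (Fin n)) : Matrix (Fin n) (Fin n) ℝ :=
  1 + β • dmat e

/-- The edge selection probability `μ({i,j}) = (p i j + p j i) / n`. -/
def edgeWeight {n : ℕ} (P : Matrix (Fin n) (Fin n) ℝ) : Sym2 (Fin n) → ℝ :=
  Sym2.lift ⟨fun i j => (P i j + P j i) / n, fun i j => by show (P i j + P j i) / n = (P j i + P i j) / n; rw [add_comm (P i j)]⟩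

/-- The weighted Laplacian of the graph on `Fin n` with edge set `Es`,
with weight `edgeWeight P e` on the edge `e`. -/
def lap {n : ℕ} (P : Matrix (Fin n) (Fin n) ℝ) (Es : Finset (Sym2 (Fin n))) :
    Matrix (Fin n) (Fin n) ℝ :=
  ∑ e ∈ Es, edgeWeight P e • dmat e

/-- The unit-weight (standard) Laplacian of the graph with edge set `Es`. -/
def lapStd {n : ℕ} (Es : Finset (Sym2 (Fin n))) : Matrix (Fin n) (Fin n) ℝ :=
  ∑ e ∈ Es, dmat e

/-- Largest (real) eigenvalue of a matrix. For a real symmetric matrix this is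
`λ_max`. -/
def lamMax {n : ℕ} (M : Matrix (Fin n) (Fin n) ℝ) : ℝ :=
  sSup {t : ℝ | ∃ v : Fin n → ℝ, v ≠ 0 ∧ M *ᵥ v = t • v}

/-- Smallest (real) eigenvalue of a matrix. -/
def lamMin {n : ℕ} (M : Matrix (Fin n) (Fin n) ℝ) : ℝ :=
  sInf {t : ℝ | ∃ v : Fin n → ℝ, v ≠ 0 ∧ M *ᵥ v = t • v}

/-- Second smallest eigenvalue of a (connected-graph) Laplacian: the smallest
eigenvalue attained by an eigenvector orthogonal to the all-ones vector. -/
def lam2 {n : ℕ} (M : Matrix (Fin n) (Fin n) ℝ) : ℝ :=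
  sInf {t : ℝ | ∃ v : Fin n → ℝ, v ≠ 0 ∧ (∑ i, v i = 0) ∧ M *ᵥ v = t • v}

/-- `P` is row-stochastic. -/
def RowStochastic {n : ℕ} (P : Matrix (Fin n) (Fin n) ℝ) : Prop :=
  (∀ i j, 0 ≤ P i j) ∧ ∀ i, ∑ j, P i j = 1

/-- `P` complies with the graph with edge set `E`. -/
def Complies {n : ℕ} (P : Matrix (Fin n) (Fin n) ℝ) (E : Finset (Sym2 (Fin n))) : Prop :=
  ∀ i j : Fin n, i ≠ j → 0 < P i j → s(i, j) ∈ E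

/-- The simple graph on `Fin n` with edge set `E`. -/
def graphOf {n : ℕ} (E : Finset (Sym2 (Fin n))) : SimpleGraph (Fin n) :=
  SimpleGraph.fromEdgeSet (↑E)

/-- `diam x = max_i x i - min_i x i`  (the quantity `𝔛` of the paper). -/
def diam {n : ℕ} (x : Fin n → ℝ) : ℝ := (⨆ i, x i) - ⨅ i, x i

/-- Selection alphabet `E ∪ {∗}` : an unordered node pair, or no selection. -/
abbrev Sel (n : ℕ) := Option (Sym2 (Fin n))

instance (n : ℕ) : MeasurableSpace (Sel n) := ⊤

/-- The update matrix triggered by a selection. -/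
def Wsel {n : ℕ} (α β : ℝ) (Epst Eneg : Finset (Sym2 (Fin n))) :
    Sel n → Matrix (Fin n) (Fin n) ℝ
  | none => 1
  | some e => if e ∈ Epst then Wpos α e else if e ∈ Eneg then Wneg β e else 1

/-- The belief process `x(k)` driven by the selection sequence `ω`. -/
def xproc {n : ℕ} (α β : ℝ) (Epst Eneg : Finset (Sym2 (Fin n))) (x0 : Fin n → ℝ)
    (ω : ℕ → Sel n) : ℕ → Fin n → ℝ
  | 0 => x0
  | k + 1 => Wsel α β Epst Eneg (ω k) *ᵥ xproc α β Epst Eneg x0 ω k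

/-- The matrix product `W(k) W(k-1) ⋯ W(0)`. -/
def Wprod {n : ℕ} (α β : ℝ) (Epst Eneg : Finset (Sym2 (Fin n))) (ω : ℕ → Sel n) :
    ℕ → Matrix (Fin n) (Fin n) ℝ
  | 0 => Wsel α β Epst Eneg (ω 0)
  | k + 1 => Wsel α β Epst Eneg (ω (k + 1)) * Wprod α β Epst Eneg ω k

/-- The one-step selection distribution `μ` on `E ∪ {∗}`. -/
def seldist {n : ℕ} (P : Matrix (Fin n) (Fin n) ℝ) (E : Finset (Sym2 (Fin n))) :
    Sel n → ℝ≥0∞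
  | none => ENNReal.ofReal (1 - ∑ e ∈ E, edgeWeight P e)
  | some e => if e ∈ E then ENNReal.ofReal (edgeWeight P e) else 0

/-- `ℙ` is the infinite product of `seldist P E`: the coordinates are i.i.d.
with per-coordinate distribution `seldist P E` (characterized on cylinders). -/
def IsIIDSel {n : ℕ} (ℙ : Measure (ℕ → Sel n)) (P : Matrix (Fin n) (Fin n) ℝ)
    (E : Finset (Sym2 (Fin n))) : Prop :=
  ∀ (K : Finset ℕ) (v : ℕ → Sel n),
    ℙ {ω | ∀ k ∈ K, ω k = v k} = ∏ k ∈ K, seldist P E (v k)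

/-- Selection alphabet for the asymmetric constrained model:
an ordered node pair (or `∗`), together with a tag in `{1,2,3}`. -/
abbrev Sel2 (n : ℕ) := Option (Fin n × Fin n) × Fin 3

instance (n : ℕ) : MeasurableSpace (Sel2 n) := ⊤

/-- weights `a, b, c` on the tags. -/
def wabc (a b c : ℝ) : Fin 3 → ℝ := ![a, b, c]

/-- Per-step distribution for the asymmetric constrained model: the pair
`({i,j}, t)` (represented by its ordered representative with `i < j`) has mass
`(wabc a b c t) · μ({i,j})`, and `(∗, t)` has mass `(wabc a b c t) · μ(∗)`. -/
def seldist2 {n : ℕ} (P : Matrix (Fin n) (Fin n) ℝ) (E : Finset (Sym2 (Fin n)))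
    (a b c : ℝ) : Sel2 n → ℝ≥0∞
  | (none, t) => ENNReal.ofReal (wabc a b c t) * ENNReal.ofReal (1 - ∑ e ∈ E, edgeWeight P e)
  | (some (i, j), t) =>
      if i < j ∧ s(i, j) ∈ E then
        ENNReal.ofReal (wabc a b c t) * ENNReal.ofReal (edgeWeight P s(i, j))
      else 0

/-- `ℙ` is the infinite product of `seldist2 P E a b c`. -/
def IsIIDSel2 {n : ℕ} (ℙ : Measure (ℕ → Sel2 n)) (P : Matrix (Fin n) (Fin n) ℝ)
    (E : Finset (Sym2 (Fin n))) (a b c : ℝ) : Prop :=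
  ∀ (K : Finset ℕ) (v : ℕ → Sel2 n),
    ℙ {ω | ∀ k ∈ K, ω k = v k} = ∏ k ∈ K, seldist2 P E a b c (v k)

/-- Projection onto `[-A, A]`. -/
def projA (A z : ℝ) : ℝ := max (-A) (min A z)

/-- `θ(e) = α` on positive edges, `-β` on negative edges. -/
def theta {n : ℕ} (α β : ℝ) (Epst Eneg : Finset (Sym2 (Fin n))) (e : Sym2 (Fin n)) : ℝ :=
  if e ∈ Epst then α else if e ∈ Eneg then -β else 0

/-- One step of the asymmetric constrained update. -/
def cstep {n : ℕ} (α β A : ℝ) (Epst Eneg : Finset (Sym2 (Fin n))) :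
    Sel2 n → (Fin n → ℝ) → (Fin n → ℝ)
  | (none, _), x => x
  | (some (i, j), t), x =>
      if t = 0 then
        Function.update x i
          (projA A ((1 - theta α β Epst Eneg s(i, j)) * x i + theta α β Epst Eneg s(i, j) * x j))
      else if t = 1 then
        Function.update x j
          (projA A ((1 - theta α β Epst Eneg s(i, j)) * x j + theta α β Epst Eneg s(i, j) * x i))
      else
        Function.update
          (Function.update x i
            (projA A ((1 - theta α β Epst Eneg s(i, j)) * x i + theta α β Epst Eneg s(i, j) * x j)))
          j
          (projA A ((1 - theta α β Epst Eneg s(i, j)) * x j + theta α β Epst Eneg s(i, j) * x i))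

/-- The constrained asymmetric belief process. -/
def cproc {n : ℕ} (α β A : ℝ) (Epst Eneg : Finset (Sym2 (Fin n))) (x0 : Fin n → ℝ)
    (ω : ℕ → Sel2 n) : ℕ → Fin n → ℝ
  | 0 => x0
  | k + 1 => cstep α β A Epst Eneg (ω k) (cproc α β A Epst Eneg x0 ω k)

/-!
On the complete graph with `p_ij = 1/(n-1)` every edge has weight `c = 2/(n(n-1))` and
`L⁺ + L⁻ = n (I - U)`, so
`I - αL⁺ + βL⁻ - U = (1 - αcn) I + (αcn - 1) U + (α+β) c L_neg`.
This matrix kills `𝟙`, and on `𝟙ᗮ` (where `U` vanishes and which `L_neg` preserves) its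
eigenvalues are `1 - αcn + (α+β) c μ`. Since `λ_max(L_neg) > 0` is attained on `𝟙ᗮ`, the largest
eigenvalue is `max 0 (1 + c ((α+β) λ_max(L_neg) - nα))`, and comparing it with `1` gives the
threshold.
-/

section Spectrum

variable {n : ℕ}

theorem mem_spectrum_iff_exists_mulVec_eq_smul {M : Matrix (Fin n) (Fin n) ℝ} {t : ℝ} :
    t ∈ spectrum ℝ M ↔ ∃ v : Fin n → ℝ, v ≠ 0 ∧ M *ᵥ v = t • v := by
  rw [← Matrix.spectrum_toLin', ← Module.End.hasEigenvalue_iff_mem_spectrum,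
    Module.End.hasEigenvalue_iff, Submodule.ne_bot_iff]
  simp only [Module.End.mem_eigenspace_iff, Matrix.toLin'_apply]
  exact ⟨fun ⟨v, h, hv⟩ => ⟨v, hv, h⟩, fun ⟨v, hv, h⟩ => ⟨v, h, hv⟩⟩

theorem lamMax_eq_sSup_spectrum (M : Matrix (Fin n) (Fin n) ℝ) :
    lamMax M = sSup (spectrum ℝ M) :=
  congrArg sSup (Set.ext fun _ => mem_spectrum_iff_exists_mulVec_eq_smul.symm)

theorem le_lamMax {M : Matrix (Fin n) (Fin n) ℝ} {t : ℝ} (ht : t ∈ spectrum ℝ M) :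
    t ≤ lamMax M := by
  rw [lamMax_eq_sSup_spectrum]
  exact le_csSup M.finite_real_spectrum.bddAbove ht

theorem lamMax_eq_of_isGreatest {M : Matrix (Fin n) (Fin n) ℝ} {m : ℝ}
    (h : IsGreatest (spectrum ℝ M) m) : lamMax M = m := by
  rw [lamMax_eq_sSup_spectrum]
  exact h.csSup_eq

theorem lamMax_mem_spectrum [NeZero n] {M : Matrix (Fin n) (Fin n) ℝ} (hM : M.IsHermitian) :
    lamMax M ∈ spectrum ℝ M := by
  rw [lamMax_eq_sSup_spectrum]
  exact Set.Nonempty.csSup_mem ⟨_, hM.eigenvalues_mem_spectrum_real 0⟩ M.finite_real_spectrum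

theorem lamMax_pos_of_trace_pos {M : Matrix (Fin n) (Fin n) ℝ} (hM : M.IsHermitian)
    (htr : 0 < M.trace) : 0 < lamMax M := by
  rw [hM.trace_eq_sum_eigenvalues, ← Finset.sum_const_zero] at htr
  obtain ⟨i, -, hi⟩ := Finset.exists_lt_of_sum_lt htr
  exact hi.trans_le (le_lamMax (hM.eigenvalues_mem_spectrum_real i))

theorem Umat_mulVec (v : Fin n → ℝ) : Umat n *ᵥ v = ((n : ℝ)⁻¹ * ∑ i, v i) • 1 := by
  ext i
  simp [Umat, Matrix.mulVec, dotProduct, Finset.mul_sum]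

theorem sum_mulVec_eq_zero {L : Matrix (Fin n) (Fin n) ℝ} (hL : L.IsHermitian)
    (hL1 : L *ᵥ 1 = 0) (v : Fin n → ℝ) : ∑ i, (L *ᵥ v) i = 0 := by
  have : 1 ⬝ᵥ (L *ᵥ v) = 0 := by
    rw [Matrix.dotProduct_mulVec, ← Matrix.mulVec_transpose,
      ← Matrix.conjTranspose_eq_transpose_of_trivial, hL.eq, hL1, zero_dotProduct]
  simpa [dotProduct] using this

theorem le_add_mul_lamMax {L : Matrix (Fin n) (Fin n) ℝ} {a b t : ℝ} (hb : 0 ≤ b)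
    {v : Fin n → ℝ} (hv0 : v ≠ 0) (hv : b • L *ᵥ v = (t - a) • v) : t ≤ a + b * lamMax L := by
  rcases hb.eq_or_lt with rfl | hb
  · rw [zero_smul, eq_comm, smul_eq_zero, sub_eq_zero] at hv
    simp [hv.resolve_right hv0]
  · have hL : (t - a) / b ∈ spectrum ℝ L := by
      refine mem_spectrum_iff_exists_mulVec_eq_smul.2 ⟨v, hv0, ?_⟩
      rw [div_eq_inv_mul, mul_smul, ← hv, smul_smul, inv_mul_cancel₀ hb.ne', one_smul]
    have := (div_le_iff₀' hb).1 (le_lamMax hL)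
    linarith

theorem smul_one_add_smul_Umat_add_smul_mulVec (a d b : ℝ) (L : Matrix (Fin n) (Fin n) ℝ)
    (v : Fin n → ℝ) :
    (a • 1 + d • Umat n + b • L) *ᵥ v = a • v + (d * ((n : ℝ)⁻¹ * ∑ i, v i)) • 1 + b • L *ᵥ v := by
  simp only [Matrix.add_mulVec, Matrix.smul_mulVec, Matrix.one_mulVec, Umat_mulVec, smul_smul]

theorem lamMax_smul_one_add_smul_Umat_add_smul [NeZero n] {L : Matrix (Fin n) (Fin n) ℝ}
    (hL : L.IsHermitian) (hL1 : L *ᵥ 1 = 0) (hpos : 0 < lamMax L) (a d : ℝ) {b : ℝ}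
    (hb : 0 ≤ b) :
    lamMax (a • 1 + d • Umat n + b • L) = max (a + d) (a + b * lamMax L) := by
  have hn : (n : ℝ) ≠ 0 := NeZero.ne _
  have hMv := smul_one_add_smul_Umat_add_smul_mulVec a d b L
  set M := a • 1 + d • Umat n + b • L
  have hbound : ∀ t ∈ spectrum ℝ M, t ≤ max (a + d) (a + b * lamMax L) := by
    intro t ht
    obtain ⟨v, hv0, hv⟩ := mem_spectrum_iff_exists_mulVec_eq_smul.1 ht
    by_cases hvs : ∑ i, v i = 0
    · refine le_max_of_le_right (le_add_mul_lamMax hb hv0 ?_)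
      rw [hMv, hvs] at hv
      rw [sub_smul, ← hv]
      simp
    · have hsum : ∑ i, (M *ᵥ v) i = (a + d) * ∑ i, v i := by
        simp only [hMv, Pi.add_apply, Pi.smul_apply, smul_eq_mul, Finset.sum_add_distrib,
          ← Finset.mul_sum, sum_mulVec_eq_zero hL hL1, Pi.one_apply, Finset.sum_const,
          Finset.card_univ, Fintype.card_fin]
        field_simp
        ring
      have : t * ∑ i, v i = (a + d) * ∑ i, v i := by
        rw [← hsum, hv]
        simp [Finset.mul_sum]
      exact le_max_of_le_left (mul_right_cancel₀ hvs this).le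
  have hone : a + d ∈ spectrum ℝ M := by
    refine mem_spectrum_iff_exists_mulVec_eq_smul.2 ⟨1, one_ne_zero, ?_⟩
    rw [hMv, hL1]
    ext
    simp [field]
  have htop : a + b * lamMax L ∈ spectrum ℝ M := by
    obtain ⟨u, hu0, hu⟩ := mem_spectrum_iff_exists_mulVec_eq_smul.1 (lamMax_mem_spectrum hL)
    have hus : ∑ i, u i = 0 := by
      simpa [hu, ← Finset.mul_sum, hpos.ne'] using sum_mulVec_eq_zero hL hL1 u
    refine mem_spectrum_iff_exists_mulVec_eq_smul.2 ⟨u, hu0, ?_⟩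
    rw [hMv, hus, hu]
    module
  refine lamMax_eq_of_isGreatest ⟨?_, hbound⟩
  rcases le_total (a + d) (a + b * lamMax L) with h | h
  · rwa [max_eq_right h]
  · rwa [max_eq_left h]

end Spectrum

section Laplacian

variable {n : ℕ}

theorem dmat_mk (i j : Fin n) : dmat s(i, j) = Matrix.vecMulVec (esub i j) (esub i j) := rfl

theorem dmat_diag (i : Fin n) : dmat s(i, i) = 0 := by
  ext a b
  simp [dmat_mk, esub, Matrix.vecMulVec_apply]

theorem dmat_apply_of_ne {a b : Fin n} (hab : a ≠ b) (e : Sym2 (Fin n)) :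
    dmat e a b = -if e = s(a, b) then 1 else 0 := by
  induction e using Sym2.ind with
  | _ i j =>
    simp only [dmat_mk, Matrix.vecMulVec_apply, esub, Sym2.eq_iff]
    split_ifs <;> grind

theorem dmat_apply_self (a : Fin n) (e : Sym2 (Fin n)) :
    dmat e a a = if a ∈ e ∧ ¬ e.IsDiag then 1 else 0 := by
  induction e using Sym2.ind with
  | _ i j =>
    simp only [dmat_mk, Matrix.vecMulVec_apply, esub, Sym2.mem_iff, Sym2.mk_isDiag_iff]
    split_ifs <;> grind

theorem dmat_posSemidef (e : Sym2 (Fin n)) : (dmat e).PosSemidef := by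
  induction e using Sym2.ind with
  | _ i j => simpa [dmat_mk] using Matrix.posSemidef_vecMulVec_self_star (esub i j)

theorem dmat_mulVec_one (e : Sym2 (Fin n)) : dmat e *ᵥ 1 = 0 := by
  induction e using Sym2.ind with
  | _ i j =>
    ext
    simp [dmat_mk, Matrix.vecMulVec_mulVec, esub, dotProduct, Finset.sum_sub_distrib]

theorem trace_dmat {i j : Fin n} (hij : i ≠ j) : (dmat s(i, j)).trace = 2 := by
  rw [dmat_mk, Matrix.trace_vecMulVec]
  simp [esub, dotProduct, mul_sub, Finset.sum_sub_distrib, hij, hij.symm]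
  norm_num

theorem lapStd_posSemidef (E : Finset (Sym2 (Fin n))) : (lapStd E).PosSemidef :=
  Matrix.posSemidef_sum E fun e _ => dmat_posSemidef e

theorem lapStd_mulVec_one (E : Finset (Sym2 (Fin n))) : lapStd E *ᵥ 1 = 0 := by
  simp [lapStd, Matrix.sum_mulVec, dmat_mulVec_one]

theorem trace_lapStd {E : Finset (Sym2 (Fin n))} (hE : ∀ e ∈ E, ¬ e.IsDiag) :
    (lapStd E).trace = 2 * E.card := by
  rw [lapStd, Matrix.trace_sum, Finset.card_eq_sum_ones, Nat.cast_sum, Finset.mul_sum]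
  refine Finset.sum_congr rfl fun e he => ?_
  induction e using Sym2.ind with
  | _ i j => simpa using trace_dmat (fun h => hE _ he (Sym2.mk_isDiag_iff.2 h))

theorem lamMax_lapStd_pos {E : Finset (Sym2 (Fin n))} (hE : ∀ e ∈ E, ¬ e.IsDiag)
    (hne : E.Nonempty) : 0 < lamMax (lapStd E) := by
  refine lamMax_pos_of_trace_pos (lapStd_posSemidef E).isHermitian ?_
  rw [trace_lapStd hE]
  exact_mod_cast Nat.mul_pos two_pos hne.card_pos

end Laplacian

section CompleteGraph

variable {n : ℕ}

theorem filter_mem_not_isDiag_eq_image {E : Finset (Sym2 (Fin n))}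
    (hE : ∀ i j, i ≠ j → s(i, j) ∈ E) (a : Fin n) :
    {e ∈ E | a ∈ e ∧ ¬ e.IsDiag} = (Finset.univ.erase a).image (fun j => s(a, j)) := by
  ext e
  induction e using Sym2.ind with
  | _ i j =>
    simp only [Finset.mem_filter, Finset.mem_image, Finset.mem_erase, Finset.mem_univ, and_true,
      Sym2.mem_iff, Sym2.mk_isDiag_iff, Sym2.eq_iff]
    constructor
    · rintro ⟨-, rfl | rfl, hij⟩
      exacts [⟨j, Ne.symm hij, Or.inl ⟨rfl, rfl⟩⟩, ⟨i, hij, Or.inr ⟨rfl, rfl⟩⟩]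
    · rintro ⟨k, hka, ⟨rfl, rfl⟩ | ⟨rfl, rfl⟩⟩
      exacts [⟨hE _ _ hka.symm, Or.inl rfl, hka.symm⟩,
        ⟨by simpa [Sym2.eq_swap] using hE _ _ hka, Or.inr rfl, hka⟩]

theorem lapStd_eq_of_complete {E : Finset (Sym2 (Fin n))} (hE : ∀ i j, i ≠ j → s(i, j) ∈ E) :
    lapStd E = (n : ℝ) • (1 - Umat n) := by
  ext a b
  simp only [lapStd, Matrix.sum_apply]
  have hn : (n : ℝ) ≠ 0 := Nat.cast_ne_zero.2 (Fin.pos a).ne'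
  rcases eq_or_ne a b with rfl | hab
  · rw [Finset.sum_congr rfl fun e _ => dmat_apply_self a e, Finset.sum_boole,
      filter_mem_not_isDiag_eq_image hE,
      Finset.card_image_of_injective _ fun _ _ => Sym2.congr_right.1]
    simp [Umat, Nat.cast_sub (Fin.pos a), field]
  · simp [dmat_apply_of_ne hab, hE a b hab, Umat, hab, hn]

theorem edgeWeight_mk (P : Matrix (Fin n) (Fin n) ℝ) (i j : Fin n) :
    edgeWeight P s(i, j) = (P i j + P j i) / n := rfl

theorem lap_eq_smul_lapStd {P : Matrix (Fin n) (Fin n) ℝ} {r : ℝ}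
    (hP : ∀ i j, P i j = if i = j then 0 else r) (E : Finset (Sym2 (Fin n))) :
    lap P E = (2 * r / n) • lapStd E := by
  rw [lap, lapStd, Finset.smul_sum]
  refine Finset.sum_congr rfl fun e _ => ?_
  induction e using Sym2.ind with
  | _ i j =>
    rcases eq_or_ne i j with rfl | hij
    · simp [dmat_diag]
    · rw [edgeWeight_mk, hP, hP, if_neg hij, if_neg hij.symm]
      ring_nf

theorem lamMax_complete_eq_max [NeZero n] {Epst Eneg : Finset (Sym2 (Fin n))}
    (hdisj : Disjoint Epst Eneg) (hloop : ∀ e ∈ Eneg, ¬ e.IsDiag)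
    (hcomplete : ∀ i j : Fin n, i ≠ j → s(i, j) ∈ Epst ∪ Eneg) (hneg : Eneg.Nonempty)
    {P : Matrix (Fin n) (Fin n) ℝ} {r : ℝ} (hP : ∀ i j, P i j = if i = j then 0 else r)
    (hr : 0 ≤ r) {α β : ℝ} (hαβ : 0 ≤ α + β) :
    lamMax (1 - α • lap P Epst + β • lap P Eneg - Umat n)
      = max 0 (1 + 2 * r / n * ((α + β) * lamMax (lapStd Eneg) - n * α)) := by
  have hpst : lapStd Epst = (n : ℝ) • (1 - Umat n) - lapStd Eneg := by
    rw [eq_sub_iff_add_eq, ← lapStd_eq_of_complete hcomplete, lapStd, lapStd, lapStd,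
      Finset.sum_union hdisj]
  have hM : 1 - α • lap P Epst + β • lap P Eneg - Umat n
      = (1 - α * (2 * r / n) * n) • 1 + (α * (2 * r / n) * n - 1) • Umat n
        + ((α + β) * (2 * r / n)) • lapStd Eneg := by
    rw [lap_eq_smul_lapStd hP, lap_eq_smul_lapStd hP, hpst]
    module
  rw [hM, lamMax_smul_one_add_smul_Umat_add_smul (lapStd_posSemidef Eneg).isHermitian
    (lapStd_mulVec_one Eneg) (lamMax_lapStd_pos hloop hneg) _ _ (by positivity)]
  congr 1 <;> ring

end CompleteGraph

theorem complete_graph_threshold_general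
    (n : ℕ) (hn : 3 ≤ n)
    (Epst Eneg : Finset (Sym2 (Fin n)))
    (hdisj : Disjoint Epst Eneg)
    (hloop : ∀ e ∈ Epst ∪ Eneg, ¬ e.IsDiag)
    (hcomplete : ∀ i j : Fin n, i ≠ j → s(i, j) ∈ Epst ∪ Eneg)
    (hneg : Eneg.Nonempty)
    (P : Matrix (Fin n) (Fin n) ℝ)
    (hPdef : ∀ i j, P i j = if i = j then 0 else ((n : ℝ) - 1)⁻¹)
    (α : ℝ) (hα0 : 0 < α) (β : ℝ) (hβ : 0 ≤ β) :
    (lamMax (1 - α • lap P Epst + β • lap P Eneg - Umat n) < 1 ↔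
      (α + β) * lamMax (lapStd Eneg) < n * α) ∧
    (1 < lamMax (1 - α • lap P Epst + β • lap P Eneg - Umat n) ↔
      n * α < (α + β) * lamMax (lapStd Eneg)) ∧
    (∀ β' : ℝ, 0 ≤ β' →
      (β' < n * α / lamMax (lapStd Eneg) - α →
        lamMax (1 - α • lap P Epst + β' • lap P Eneg - Umat n) < 1) ∧
      (n * α / lamMax (lapStd Eneg) - α < β' →
        1 < lamMax (1 - α • lap P Epst + β' • lap P Eneg - Umat n))) := by
  have : NeZero n := ⟨by omega⟩
  have hloop_neg : ∀ e ∈ Eneg, ¬ e.IsDiag := fun e he => hloop e (Finset.mem_union_right _ he)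
  have hspec : 0 < lamMax (lapStd Eneg) := lamMax_lapStd_pos hloop_neg hneg
  have hr : 0 < ((n : ℝ) - 1)⁻¹ := by
    have : (3 : ℝ) ≤ n := by exact_mod_cast hn
    exact inv_pos.2 (by linarith)
  have hw : 0 < 2 * ((n : ℝ) - 1)⁻¹ / n := by positivity
  have hlamMax (β' : ℝ) (hβ' : 0 ≤ β') :=
    lamMax_complete_eq_max (α := α) (β := β') hdisj hloop_neg hcomplete hneg hPdef hr.le
      (by positivity)
  have hlt (β' : ℝ) (hβ' : 0 ≤ β') : lamMax (1 - α • lap P Epst + β' • lap P Eneg - Umat n) < 1 ↔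
      (α + β') * lamMax (lapStd Eneg) < n * α := by
    rw [hlamMax β' hβ', max_lt_iff, add_lt_iff_neg_left, ← smul_eq_mul,
      smul_neg_iff_of_pos_left hw, sub_neg]
    exact and_iff_right one_pos
  have hgt (β' : ℝ) (hβ' : 0 ≤ β') : 1 < lamMax (1 - α • lap P Epst + β' • lap P Eneg - Umat n) ↔
      n * α < (α + β') * lamMax (lapStd Eneg) := by
    rw [hlamMax β' hβ', lt_max_iff, lt_add_iff_pos_right, mul_pos_iff_of_pos_left hw, sub_pos]
    exact or_iff_right (by norm_num)
  refine ⟨hlt β hβ, hgt β hβ, fun β' hβ' =>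
    ⟨fun h => (hlt β' hβ').2 ?_, fun h => (hgt β' hβ').2 ?_⟩⟩
  · rwa [lt_sub_iff_add_lt', lt_div_iff₀ hspec] at h
  · rwa [sub_lt_iff_lt_add', div_lt_iff₀ hspec] at h

theorem complete_graph_threshold
    (n : ℕ) (hn : 3 ≤ n)
    (Epst Eneg : Finset (Sym2 (Fin n)))
    (hdisj : Disjoint Epst Eneg)
    (hloop : ∀ e ∈ Epst ∪ Eneg, ¬ e.IsDiag)
    (hcomplete : ∀ i j : Fin n, i ≠ j → s(i, j) ∈ Epst ∪ Eneg)
    (hneg : Eneg.Nonempty)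
    (P : Matrix (Fin n) (Fin n) ℝ)
    (hPdef : ∀ i j, P i j = if i = j then 0 else ((n : ℝ) - 1)⁻¹)
    (α : ℝ) (hα0 : 0 < α) (hα1 : α ≤ 1) (β : ℝ) (hβ : 0 ≤ β) :
    (lamMax (1 - α • lap P Epst + β • lap P Eneg - Umat n) < 1 ↔
      (α + β) * lamMax (lapStd Eneg) < n * α) ∧
    (1 < lamMax (1 - α • lap P Epst + β • lap P Eneg - Umat n) ↔
      n * α < (α + β) * lamMax (lapStd Eneg)) ∧
    (∀ β' : ℝ, 0 ≤ β' →
      (β' < n * α / lamMax (lapStd Eneg) - α →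
        lamMax (1 - α • lap P Epst + β' • lap P Eneg - Umat n) < 1) ∧
      (n * α / lamMax (lapStd Eneg) - α < β' →
        1 < lamMax (1 - α • lap P Epst + β' • lap P Eneg - Umat n))) :=
  complete_graph_threshold_general n hn Epst Eneg hdisj hloop hcomplete hneg P hPdef α hα0 β hβ

end SignedOpinion
end
end

section
/- Let G be the cycle graph on n ≥ 3 nodes (edges {i, i+1} for 1 ≤ i ≤ n−1 together with {n, 1}), with exactly one edge negative and all other edges positive, and take p_ij = 1/2 for every edge {i,j} of the cycle and p_ij = 0 otherwise (including p_ii = 0). Then for all α ∈ [0,1] and β ≥ 0: λ_max(I − αL⁺ + βL⁻ − U) ≥ 1 + (β − α)/n. In particular, if β ≥ α then λ_max(I − αL⁺ + βL⁻ − U) ≥ 1, so the mean-convergence threshold satisfies β_⋆ < α irrespective of n. -/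
open Matrix MeasureTheory Filter
open scoped ENNReal

noncomputable section

namespace SignedOpinion

/-! The test vector `v = e i - e (i + 1)`, supported on the negative edge `{i, i + 1}`, sums to
zero, so `U v = 0`, and every cycle edge has weight `1 / n`. The negative edge contributes
`vᵀ L⁻ v = 4 / n`; among the positive edges only `{i - 1, i}` and `{i + 1, i + 2}` meet the support
of `v` (they are distinct because `n ≥ 3`), so `vᵀ L⁺ v = 2 / n`. With `vᵀ v = 2` the Rayleigh
quotient of `v` is `1 - α / n + 2 β / n ≥ 1 + (β - α) / n`, and `λ_max` dominates every Rayleigh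
quotient. -/

open Finset

variable {n : ℕ}

lemma bddAbove_eigenvalues (A : Matrix (Fin n) (Fin n) ℝ) :
    BddAbove {t : ℝ | ∃ v : Fin n → ℝ, v ≠ 0 ∧ A *ᵥ v = t • v} := by
  refine ⟨‖toEuclideanCLM (𝕜 := ℝ) A‖, ?_⟩
  rintro t ⟨v, hv, hAv⟩
  have hx : 0 < ‖WithLp.toLp 2 v‖ := norm_pos_iff.mpr (by simpa using hv)
  have hTx : toEuclideanCLM (𝕜 := ℝ) A (WithLp.toLp 2 v) = t • WithLp.toLp 2 v := by
    simp [hAv]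
  refine le_of_mul_le_mul_right ?_ hx
  calc t * ‖WithLp.toLp 2 v‖ ≤ ‖t • WithLp.toLp 2 v‖ := by
        rw [norm_smul, Real.norm_eq_abs]; gcongr; exact le_abs_self t
    _ ≤ _ := hTx ▸ (toEuclideanCLM (𝕜 := ℝ) A).le_opNorm _

lemma le_lamMax_s4 {A : Matrix (Fin n) (Fin n) ℝ} {t : ℝ} {v : Fin n → ℝ} (hv : v ≠ 0)
    (hAv : A *ᵥ v = t • v) : t ≤ lamMax A :=
  le_csSup (bddAbove_eigenvalues A) ⟨v, hv, hAv⟩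

theorem dotProduct_mulVec_le_lamMax_mul {A : Matrix (Fin n) (Fin n) ℝ}
    (hA : A.IsHermitian) {v : Fin n → ℝ} (hv : v ≠ 0) :
    v ⬝ᵥ (A *ᵥ v) ≤ lamMax A * (v ⬝ᵥ v) := by
  have : Nontrivial (EuclideanSpace ℝ (Fin n)) :=
    nontrivial_of_ne (WithLp.toLp 2 v) 0 (by simpa using hv)
  set T := toEuclideanCLM (𝕜 := ℝ) A
  have hT : (T : EuclideanSpace ℝ (Fin n) →ₗ[ℝ] _).IsSymmetric :=
    isSymmetric_toEuclideanLin_iff.mpr hA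
  -- the supremum of the Rayleigh quotient is an eigenvalue
  obtain ⟨x, hx⟩ := hT.hasEigenvalue_iSup_of_finiteDimensional.exists_hasEigenvector
  have hsup : ⨆ x : {x : EuclideanSpace ℝ (Fin n) // x ≠ 0}, T.rayleighQuotient x ≤ lamMax A :=
    le_lamMax_s4 (v := x.ofLp) (by simpa using hx.2)
      (congrArg WithLp.ofLp (Module.End.mem_eigenspace_iff.mp hx.1))
  have hbdd : BddAbove (Set.range fun x : {x : EuclideanSpace ℝ (Fin n) // x ≠ 0} =>
      T.rayleighQuotient x) :=
    ⟨‖T‖, Set.forall_mem_range.2 fun x => (le_abs_self _).trans (T.rayleighQuotient_le_norm x)⟩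
  have hle := (le_ciSup hbdd ⟨WithLp.toLp 2 v, by simpa using hv⟩).trans hsup
  have hvv : 0 < v ⬝ᵥ v := by simpa using (dotProduct_star_self_pos_iff (v := v)).mpr hv
  rw [← div_le_iff₀ hvv]
  convert hle using 1
  rw [ContinuousLinearMap.rayleighQuotient, ContinuousLinearMap.reApplyInnerSelf,
    EuclideanSpace.real_norm_sq_eq]
  simp [T, EuclideanSpace.inner_eq_star_dotProduct, dotProduct, sq]

lemma dotProduct_esub (x : Fin n → ℝ) (i j : Fin n) : x ⬝ᵥ esub i j = x i - x j := by
  simp [esub, dotProduct, mul_sub, sum_sub_distrib]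

lemma esub_dotProduct_self {i j : Fin n} (h : i ≠ j) : esub i j ⬝ᵥ esub i j = 2 := by
  rw [dotProduct_esub]
  simp [esub, h, h.symm]
  norm_num

lemma esub_ne_zero {i j : Fin n} (h : i ≠ j) : esub i j ≠ 0 := fun h0 => by
  simpa [h0] using esub_dotProduct_self h

lemma sum_esub (i j : Fin n) : ∑ k, esub i j k = 0 := by
  simp [esub, sum_sub_distrib]

lemma dotProduct_dmat_mulVec (x : Fin n → ℝ) (i j : Fin n) :
    x ⬝ᵥ (dmat s(i, j) *ᵥ x) = (x i - x j) ^ 2 := by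
  simp only [dmat, dmatAux, Sym2.lift_mk, vecMulVec_mulVec]
  simp [dotProduct_esub, dotProduct_comm _ x, sq]

lemma dotProduct_lap_mulVec (P : Matrix (Fin n) (Fin n) ℝ) (E : Finset (Sym2 (Fin n)))
    (x : Fin n → ℝ) :
    x ⬝ᵥ (lap P E *ᵥ x) = ∑ e ∈ E, edgeWeight P e * (x ⬝ᵥ (dmat e *ᵥ x)) := by
  simp [lap, sum_mulVec, dotProduct_sum, smul_mulVec]

lemma isHermitian_dmat (e : Sym2 (Fin n)) : (dmat e).IsHermitian := by
  induction e using Sym2.ind with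
  | _ i j => exact IsHermitian.ext fun a b => by simp [dmat, dmatAux, vecMulVec_apply, mul_comm]

lemma isHermitian_lap (P : Matrix (Fin n) (Fin n) ℝ) (E : Finset (Sym2 (Fin n))) :
    (lap P E).IsHermitian :=
  sum_induction _ IsHermitian (fun _ _ => IsHermitian.add) isHermitian_zero
    fun e _ => (isHermitian_dmat e).smul (IsSelfAdjoint.all _)

lemma isHermitian_Umat : (Umat n).IsHermitian :=
  IsHermitian.ext fun a b => by simp [Umat]

lemma Umat_mulVec_eq_zero {v : Fin n → ℝ} (hv : ∑ k, v k = 0) : Umat n *ᵥ v = 0 := by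
  ext
  simp [Umat, mulVec, dotProduct, ← mul_sum, hv]

lemma edgeWeight_eq_inv_of_eq_half {P : Matrix (Fin n) (Fin n) ℝ} {E : Finset (Sym2 (Fin n))}
    (hP : ∀ i j, P i j = if s(i, j) ∈ E then (1 : ℝ) / 2 else 0) {e : Sym2 (Fin n)}
    (he : e ∈ E) : edgeWeight P e = (n : ℝ)⁻¹ := by
  induction e using Sym2.ind with
  | _ i j =>
    have hji : s(j, i) ∈ E := Sym2.eq_swap (a := i) ▸ he
    simp only [edgeWeight, Sym2.lift_mk, hP, if_pos he, if_pos hji]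
    ring

lemma dotProduct_one_sub_smul_lap_add_smul_lap_sub_Umat_mulVec (P : Matrix (Fin n) (Fin n) ℝ)
    (E E' : Finset (Sym2 (Fin n))) (α β : ℝ) {v : Fin n → ℝ} (hv : ∑ k, v k = 0) :
    v ⬝ᵥ ((1 - α • lap P E + β • lap P E' - Umat n) *ᵥ v) =
      v ⬝ᵥ v - α * (v ⬝ᵥ (lap P E *ᵥ v)) + β * (v ⬝ᵥ (lap P E' *ᵥ v)) := by
  simp [sub_mulVec, add_mulVec, smul_mulVec, Umat_mulVec_eq_zero hv, dotProduct_sub,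
    dotProduct_add]

lemma isHermitian_one_sub_smul_lap_add_smul_lap_sub_Umat (P : Matrix (Fin n) (Fin n) ℝ)
    (E E' : Finset (Sym2 (Fin n))) (α β : ℝ) :
    (1 - α • lap P E + β • lap P E' - Umat n).IsHermitian :=
  ((isHermitian_one.sub ((isHermitian_lap P E).smul (IsSelfAdjoint.all α))).add
    ((isHermitian_lap P E').smul (IsSelfAdjoint.all β))).sub isHermitian_Umat

lemma fin_two_ne_zero [NeZero n] (h : 3 ≤ n) : (2 : Fin n) ≠ 0 := by
  simp [Fin.ext_iff, Nat.mod_eq_of_lt (show 2 < n by omega)]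

open Fin.CommRing in
lemma injective_sym2_mk_add_one [NeZero n] (h2 : (2 : Fin n) ≠ 0) :
    Function.Injective fun i : Fin n => s(i, i + 1) := by
  intro a b hab
  rcases Sym2.eq_iff.mp hab with ⟨h, -⟩ | ⟨ha, hb⟩
  · exact h
  · exact absurd (by linear_combination hb - ha) h2

open Fin.CommRing in
lemma ne_add_one_of_two_ne_zero [NeZero n] (h2 : (2 : Fin n) ≠ 0) (i : Fin n) : i ≠ i + 1 :=
  fun h => h2 (by linear_combination -2 * h)

open Fin.CommRing in
lemma sum_erase_sq_esub_sub_esub_add_one [NeZero n] (h2 : (2 : Fin n) ≠ 0) (i : Fin n) :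
    ∑ k ∈ univ.erase i, (esub i (i + 1) k - esub i (i + 1) (k + 1)) ^ 2 = 2 := by
  have h1 : (1 : Fin n) ≠ 0 := fun h => h2 (by linear_combination 2 * h)
  have hprev : i - 1 ≠ i := fun h => h1 (by linear_combination -h)
  have hnext := (ne_add_one_of_two_ne_zero h2 i).symm
  have hnext2 : i + 1 + 1 ≠ i := fun h => h2 (by linear_combination h)
  have hnext2' := (ne_add_one_of_two_ne_zero h2 (i + 1)).symm
  have hprev_next : i - 1 ≠ i + 1 := fun h => h2 (by linear_combination -h)
  rw [sum_eq_add_of_mem (i - 1) (i + 1) (by simpa using hprev) (by simpa using hnext)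
    hprev_next]
  · simp only [esub, sub_add_cancel, if_neg hprev, if_neg hprev_next, if_neg hnext,
      if_neg hnext.symm, if_neg hnext2, if_neg hnext2', ↓reduceIte]
    norm_num
  · intro c hc ⟨hc_prev, hc_next⟩
    have hci : c ≠ i := by simpa using hc
    have hc1 : c + 1 ≠ i := fun h => hc_prev (by linear_combination h)
    have hc2 : c + 1 ≠ i + 1 := fun h => hci (by linear_combination h)
    simp [esub, hci, hc_next, hc1, hc2]

lemma dotProduct_lap_image_erase_mulVec_esub [NeZero n] (h2 : (2 : Fin n) ≠ 0)
    {P : Matrix (Fin n) (Fin n) ℝ} (hw : ∀ k : Fin n, edgeWeight P s(k, k + 1) = (n : ℝ)⁻¹)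
    (i : Fin n) :
    esub i (i + 1) ⬝ᵥ (lap P ((univ.erase i).image fun k => s(k, k + 1)) *ᵥ
      esub i (i + 1)) = 2 / n := by
  rw [dotProduct_lap_mulVec, sum_image fun a _ b _ h => injective_sym2_mk_add_one h2 h]
  simp only [hw, dotProduct_dmat_mulVec, ← mul_sum, sum_erase_sq_esub_sub_esub_add_one h2]
  ring

lemma dotProduct_lap_singleton_mulVec_esub {P : Matrix (Fin n) (Fin n) ℝ} {i j : Fin n}
    (hij : i ≠ j) (hw : edgeWeight P s(i, j) = (n : ℝ)⁻¹) :
    esub i j ⬝ᵥ (lap P {s(i, j)} *ᵥ esub i j) = 4 / n := by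
  rw [dotProduct_lap_mulVec, sum_singleton, hw, dotProduct_dmat_mulVec]
  simp [esub, hij, hij.symm]
  ring

theorem ring_graph_divergence_bound_general
    (n : ℕ) [NeZero n] (hn : 3 ≤ n)
    (Epst Eneg : Finset (Sym2 (Fin n)))
    (hdisj : Disjoint Epst Eneg)
    (hcycle : Epst ∪ Eneg = Finset.image (fun i : Fin n => s(i, i + 1)) Finset.univ)
    (hneg : Eneg.card = 1)
    (P : Matrix (Fin n) (Fin n) ℝ)
    (hPdef : ∀ i j, P i j = if s(i, j) ∈ Epst ∪ Eneg then (1 : ℝ) / 2 else 0)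
    (α β : ℝ) (hβ : 0 ≤ β) :
    1 + (β - α) / n ≤ lamMax (1 - α • lap P Epst + β • lap P Eneg - Umat n) ∧
    (α ≤ β → 1 ≤ lamMax (1 - α • lap P Epst + β • lap P Eneg - Umat n)) := by
  have h2 := fin_two_ne_zero hn
  have hn0 : (0 : ℝ) < n := Nat.cast_pos.mpr (NeZero.pos n)
  have hw : ∀ k : Fin n, edgeWeight P s(k, k + 1) = (n : ℝ)⁻¹ := fun k =>
    edgeWeight_eq_inv_of_eq_half hPdef (hcycle ▸ mem_image_of_mem _ (mem_univ k))
  obtain ⟨e, hE⟩ := card_eq_one.mp hneg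
  obtain ⟨i, -, rfl⟩ := mem_image.mp
    (hcycle ▸ mem_union_right Epst (hE ▸ mem_singleton_self e))
  have hEpst : Epst = (univ.erase i).image fun k => s(k, k + 1) := by
    rw [image_erase (injective_sym2_mk_add_one h2), ← hcycle,
      ← sdiff_singleton_eq_erase, ← hE, union_sdiff_cancel_right hdisj]
  have hi := ne_add_one_of_two_ne_zero h2 i
  have hray := dotProduct_mulVec_le_lamMax_mul
    (isHermitian_one_sub_smul_lap_add_smul_lap_sub_Umat P Epst Eneg α β) (esub_ne_zero hi)
  rw [dotProduct_one_sub_smul_lap_add_smul_lap_sub_Umat_mulVec _ _ _ _ _ (sum_esub _ _),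
    esub_dotProduct_self hi, hEpst, dotProduct_lap_image_erase_mulVec_esub h2 hw, ← hEpst, hE,
    dotProduct_lap_singleton_mulVec_esub hi (hw i), ← hE] at hray
  have hbound : 1 + (β - α) / n ≤ lamMax (1 - α • lap P Epst + β • lap P Eneg - Umat n) := by
    have hsplit : 2 - α * (2 / n) + β * (4 / n) = 2 * (1 + (β - α) / n) + 2 * (β / n) := by ring
    linarith [div_nonneg hβ hn0.le]
  exact ⟨hbound, fun hαβ =>
    (le_add_of_nonneg_right (div_nonneg (sub_nonneg.2 hαβ) hn0.le)).trans hbound⟩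

theorem ring_graph_divergence_bound
    (n : ℕ) [NeZero n] (hn : 3 ≤ n)
    (Epst Eneg : Finset (Sym2 (Fin n)))
    (hdisj : Disjoint Epst Eneg)
    (hcycle : Epst ∪ Eneg = Finset.image (fun i : Fin n => s(i, i + 1)) Finset.univ)
    (hneg : Eneg.card = 1)
    (P : Matrix (Fin n) (Fin n) ℝ)
    (hPdef : ∀ i j, P i j = if s(i, j) ∈ Epst ∪ Eneg then (1 : ℝ) / 2 else 0)
    (α β : ℝ) (hα0 : 0 ≤ α) (hα1 : α ≤ 1) (hβ : 0 ≤ β) :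
    1 + (β - α) / n ≤ lamMax (1 - α • lap P Epst + β • lap P Eneg - Umat n) ∧
    (α ≤ β → 1 ≤ lamMax (1 - α • lap P Epst + β • lap P Eneg - Umat n)) :=
  ring_graph_divergence_bound_general n hn Epst Eneg hdisj hcycle hneg P hPdef α β hβ

end SignedOpinion
end
end
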